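/- Let d_1 = 2n_1 and d_2 = 2n_2 be even numbers, d = 2n = d_1+d_2, and let λ_1, λ_2 be special orthogonal partitions of d_1 and d_2. Then W = W(λ_1,λ_2) (type D data) is an orthogonal partition of d and D_o(W) = D_o(λ_1) + D_o(λ_2) + n(2n−1) − n_1(2n_1−1) − n_2(2n_2−1). -/

import Mathlib

/-- `f` is a partition of `d`: weakly decreasing, finitely many nonzero terms, total sum `d`.
    Indexing is 0-based: `f j` is the `(j+1)`-st part. -/
def IsPartitionOf (f : ℕ → ℕ) (d : ℕ) : Prop :=
  Antitone f ∧ ∃ N, (∀ j, N ≤ j → f j = 0) ∧ ∑ j ∈ Finset.range N, f j = d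

/-- Transpose of a partition (0-based): `ptrans f k` = #{j : f j ≥ k+1}, i.e. `(f^t)_{k+1}`. -/
noncomputable def ptrans (f : ℕ → ℕ) : ℕ → ℕ := fun k => Nat.card {j : ℕ // k + 1 ≤ f j}

/-- Multiplicity of the part `k` in `f` (meaningful for `k > 0`). -/
noncomputable def pmult (f : ℕ → ℕ) (k : ℕ) : ℕ := Nat.card {j : ℕ // f j = k}

/-- Orthogonal: every even positive part occurs with even multiplicity. -/
def IsOrthogonal (f : ℕ → ℕ) : Prop := ∀ k, 0 < k → Even k → Even (pmult f k)

/-- Symplectic: every odd positive part occurs with even multiplicity. -/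
def IsSymplectic (f : ℕ → ℕ) : Prop := ∀ k, 0 < k → Odd k → Even (pmult f k)

/-- Dominance order for ℕ-valued sequences. -/
def NDomLE (f g : ℕ → ℕ) : Prop :=
  ∀ N, ∑ j ∈ Finset.range N, f j ≤ ∑ j ∈ Finset.range N, g j

/-- Dominance order for ℤ-valued sequences. -/
def DomLE (f g : ℕ → ℤ) : Prop :=
  ∀ N, ∑ j ∈ Finset.range N, f j ≤ ∑ j ∈ Finset.range N, g j

/-- `ν` is the `P`-collapse of `μ` (both of total size `m`): `ν` is a partition of `m`
    satisfying `P`, `ν ≤ μ`, and every partition `σ` of `m` satisfying `P` with `σ ≤ μ`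
    satisfies `σ ≤ ν`. -/
def IsCollapse (P : (ℕ → ℕ) → Prop) (m : ℕ) (μ ν : ℕ → ℕ) : Prop :=
  IsPartitionOf ν m ∧ P ν ∧ NDomLE ν μ ∧
    ∀ σ, IsPartitionOf σ m → P σ → NDomLE σ μ → NDomLE σ ν

/-- B-collapse (largest orthogonal partition below `μ`, `m` odd). -/
def IsBCollapse : ℕ → (ℕ → ℕ) → (ℕ → ℕ) → Prop := IsCollapse IsOrthogonal
/-- C-collapse (largest symplectic partition below `μ`, `m` even). -/
def IsCCollapse : ℕ → (ℕ → ℕ) → (ℕ → ℕ) → Prop := IsCollapse IsSymplectic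
/-- D-collapse (largest orthogonal partition below `μ`, `m` even). -/
def IsDCollapse : ℕ → (ℕ → ℕ) → (ℕ → ℕ) → Prop := IsCollapse IsOrthogonal

/-- `μ^−` : decrease the smallest nonzero part by 1. -/
def minusOne (f : ℕ → ℕ) : ℕ → ℕ :=
  fun j => if 0 < f j ∧ f (j+1) = 0 then f j - 1 else f j

/-- `μ^+` : increase the largest part by 1. -/
def plusOne (f : ℕ → ℕ) : ℕ → ℕ := fun j => if j = 0 then f 0 + 1 else f j

/-- `u = f ∪ g` : `u` is weakly decreasing, finitely supported, and every positive
    part occurs in `u` with multiplicity the sum of its multiplicities in `f` and `g`. -/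
def IsUnionOf (u f g : ℕ → ℕ) : Prop :=
  Antitone u ∧ (∃ N, ∀ j, N ≤ j → u j = 0) ∧
    ∀ k, 0 < k → pmult u k = pmult f k + pmult g k

/-- The sequence ξ attached to `(f, g, ε₁, ε₂, d)`.  Index `j` here corresponds to the
    1-based index `j+1` of the paper. -/
def xiSeq (f g : ℕ → ℕ) (e1 e2 d : ℕ) : ℕ → ℤ := fun j =>
  if (j + 1) % 2 = (d + 1) % 2 ∧ f j % 2 = e1 ∧ g j % 2 = e2 ∧
      (j = 0 ∨ f j + g j < f (j - 1) + g (j - 1)) then 1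
  else if (j + 1) % 2 = d % 2 ∧ f j % 2 = e1 ∧ g j % 2 = e2 ∧
      f (j + 1) + g (j + 1) < f j + g j then -1
  else 0

/-- The Waldspurger sequence `W(f,g) = f + g + ξ` (ℤ-valued a priori). -/
def wald (f g : ℕ → ℕ) (e1 e2 d : ℕ) : ℕ → ℤ :=
  fun j => (f j : ℤ) + (g j : ℤ) + xiSeq f g e1 e2 d j

/-- Sum of squares of the transpose parts: `Σ_k ((λᵗ)_k)²` (k ranges over 1,…,λ₁). -/
noncomputable def sumSqTrans (f : ℕ → ℕ) : ℕ := ∑ k ∈ Finset.range (f 0), (ptrans f k)^2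

/-- Number of odd parts `#{j : λ_j odd}`. -/
noncomputable def oddCount (f : ℕ → ℕ) : ℕ := Nat.card {j : ℕ // Odd (f j)}

/-- `D_o(λ) = N(N−1)/2 − (Σ_k ((λᵗ)_k)² − #{odd parts})/2`, the dimension of the
nilpotent orbit of Jordan type `λ` in `so_N`. -/
noncomputable def Dorth (f : ℕ → ℕ) (N : ℕ) : ℚ :=
  (N : ℚ) * ((N : ℚ) - 1) / 2 - ((sumSqTrans f : ℚ) - (oddCount f : ℚ)) / 2

/-- `D_sp(λ) = n(2n+1) − (Σ_k ((λᵗ)_k)² + #{odd parts})/2`, the dimension of the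
nilpotent orbit of Jordan type `λ` in `sp_{2n}`. -/
noncomputable def Dsymp (f : ℕ → ℕ) (n : ℕ) : ℚ :=
  (n : ℚ) * (2 * (n : ℚ) + 1) - ((sumSqTrans f : ℚ) + (oddCount f : ℚ)) / 2

/-!
Write `μ = λ₁ + λ₂`. Since `λᵢᵗ` is symplectic, the parts of `λᵢ` pair up with equal parities,
`λᵢ(2i) ≡ λᵢ(2i+1) (mod 2)` (0-based indices); with orthogonality this forces every descent of
`λᵢ` next to an even part to occur at an even index. On a run of `μ` where both `λᵢ` are odd,
`ξ` is `+1` at the start if that index is even, `-1` at the end if that index is odd, and `0`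
elsewhere; on all other runs it vanishes. Grouping the indices in pairs `2i, 2i+1` makes
`∑ ξⱼ` and `∑ ((2j+1) ξⱼ - |ξⱼ| + 2·[λ₁(j), λ₂(j) both odd])` telescope to `0`. The first sum
gives `|W| = d₁ + d₂`. Since `∑ₖ ((λᵗ)ₖ)² = ∑ⱼ (2j+1) λⱼ` and the parity of `Wⱼ` is read off
from `λ₁(j), λ₂(j), ξⱼ`, the second shows that `∑ ((Wᵗ)ₖ)² - #{odd parts of W}` is additive,
which is the dimension formula. Finally, an even part `k` of `W` occurs exactly at the indices
of the run `μ = k` where `ξ = 0`; there are evenly many of them, by the description of `ξ` if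
both `λᵢ` are odd on the run, and by the descent property of its endpoints otherwise.
-/

open Finset

lemma sum_range_two_mul_add_one (m : ℕ) : ∑ j ∈ range m, (2 * j + 1) = m ^ 2 := by
  induction m with
  | zero => simp
  | succ m ih => rw [sum_range_succ, ih]; ring

lemma sum_range_two_mul_eq_sub {M : Type*} [AddCommGroup M] (u v : ℕ → M)
    (h : ∀ i, u (2 * i) + u (2 * i + 1) = v (i + 1) - v i) (T : ℕ) :
    ∑ j ∈ range (2 * T), u j = v T - v 0 := by
  induction T with
  | zero => simp
  | succ T ih =>
    rw [show 2 * (T + 1) = 2 * T + 1 + 1 by ring, sum_range_succ, sum_range_succ, ih,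
      add_assoc, h]
    abel

lemma natCard_subtype_eq_card {P : ℕ → Prop} (s : Finset ℕ) (h : ∀ j, P j ↔ j ∈ s) :
    Nat.card {j // P j} = #s := by
  rw [← Set.ncard_coe_finset, ← Nat.card_coe_set_eq]
  exact Nat.card_congr (Equiv.subtypeEquivRight h)

def ParityPaired (f : ℕ → ℕ) : Prop := ∀ i, f (2 * i) % 2 = f (2 * i + 1) % 2

section Partition

variable {f : ℕ → ℕ} {N : ℕ}

lemma IsPartitionOf.sum_range_eq {d : ℕ} (h : IsPartitionOf f d) (hN : ∀ j, N ≤ j → f j = 0) :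
    ∑ j ∈ range N, f j = d := by
  obtain ⟨-, M, hM, hsum⟩ := h
  have hext : ∀ {A B}, A ≤ B → (∀ j, A ≤ j → f j = 0) →
      ∑ j ∈ range B, f j = ∑ j ∈ range A, f j := fun hAB hA =>
    (sum_subset (range_subset_range.2 hAB) fun j _ hj => hA j (by simpa using hj)).symm
  rw [← hsum, ← hext (le_max_left N M) hN, hext (le_max_right N M) hM]

lemma lt_ptrans_iff (hf : Antitone f) (hN : ∀ j, N ≤ j → f j = 0) (c j : ℕ) :
    j < ptrans f c ↔ c + 1 ≤ f j := by
  have hex : ∃ m, f m < c + 1 := ⟨N, by simp [hN N le_rfl]⟩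
  have hcard : ptrans f c = Nat.find hex := by
    rw [ptrans, natCard_subtype_eq_card (range (Nat.find hex))]
    · exact card_range _
    intro i
    rw [mem_range]
    refine ⟨fun hi => ?_, fun hi => not_lt.mp (Nat.find_min hex hi)⟩
    by_contra! hle
    exact absurd ((hf hle).trans_lt (Nat.find_spec hex)) (not_lt.mpr hi)
  rw [hcard, Nat.lt_find_iff]
  exact ⟨fun h => not_lt.mp (h j le_rfl), fun h m hm => not_lt.mpr (h.trans (hf hm))⟩

lemma eq_iff_ptrans_le_and_lt (hf : Antitone f) (hN : ∀ j, N ≤ j → f j = 0) {v : ℕ}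
    (hv : 0 < v) (j : ℕ) :
    f j = v ↔ ptrans f v ≤ j ∧ j < ptrans f (v - 1) := by
  rw [← not_lt, lt_ptrans_iff hf hN, lt_ptrans_iff hf hN]
  omega

lemma pmult_ptrans_succ (hf : Antitone f) (hN : ∀ j, N ≤ j → f j = 0) (m : ℕ) :
    pmult (ptrans f) (m + 1) = f m - f (m + 1) := by
  rw [pmult, natCard_subtype_eq_card (Ico (f (m + 1)) (f m)), Nat.card_Ico]
  intro k
  have h := lt_ptrans_iff hf hN k m
  have h' := lt_ptrans_iff hf hN k (m + 1)
  rw [mem_Ico]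
  omega

lemma parityPaired_of_isSymplectic_ptrans (hf : Antitone f) (hN : ∀ j, N ≤ j → f j = 0)
    (hs : IsSymplectic (ptrans f)) : ParityPaired f := by
  intro i
  have h := hs (2 * i + 1) (by omega) (odd_two_mul_add_one i)
  rw [pmult_ptrans_succ hf hN, Nat.even_iff] at h
  have : f (2 * i + 1) ≤ f (2 * i) := hf (Nat.le_succ _)
  omega

/-- Each `((fᵗ)ₖ)²` is the sum of the first `(fᵗ)ₖ` odd numbers. -/
lemma sumSqTrans_eq_sum (hf : Antitone f) (hN : ∀ j, N ≤ j → f j = 0) :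
    sumSqTrans f = ∑ j ∈ range N, (2 * j + 1) * f j := by
  have hrow : ∀ k, (ptrans f k) ^ 2 = ∑ j ∈ range N, if k + 1 ≤ f j then 2 * j + 1 else 0 := by
    intro k
    rw [← sum_filter, ← sum_range_two_mul_add_one]
    congr 1
    ext j
    rw [mem_filter, mem_range, mem_range, lt_ptrans_iff hf hN]
    refine ⟨fun h => ⟨?_, h⟩, And.right⟩
    by_contra! hj
    simp [hN j hj] at h
  have hcol : ∀ j, (∑ k ∈ range (f 0), if k + 1 ≤ f j then 2 * j + 1 else 0)
      = (2 * j + 1) * f j := by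
    intro j
    have hrange : (range (f 0)).filter (fun k => k + 1 ≤ f j) = range (f j) := by
      ext k
      have := hf (Nat.zero_le j)
      simp only [mem_filter, mem_range]
      omega
    rw [← sum_filter, hrange, sum_const, card_range, smul_eq_mul, mul_comm]
  simp only [sumSqTrans, hrow]
  rw [sum_comm]
  exact sum_congr rfl fun j _ => hcol j

lemma oddCount_eq_sum (hN : ∀ j, N ≤ j → f j = 0) :
    oddCount f = ∑ j ∈ range N, f j % 2 := by
  rw [oddCount, natCard_subtype_eq_card ((range N).filter fun j => Odd (f j)), card_filter]
  · refine sum_congr rfl fun j _ => ?_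
    split_ifs with h <;> rw [Nat.odd_iff] at h <;> omega
  intro j
  rw [mem_filter, mem_range]
  refine ⟨fun h => ⟨?_, h⟩, And.right⟩
  by_contra! hj
  simp [hN j hj] at h

lemma sumSqTrans_sub_oddCount_eq_sum (hf : Antitone f) (hN : ∀ j, N ≤ j → f j = 0) :
    (sumSqTrans f : ℤ) - oddCount f = ∑ j ∈ range N, ((2 * j + 1 : ℤ) * f j - (f j % 2 : ℕ)) := by
  rw [sumSqTrans_eq_sum hf hN, oddCount_eq_sum hN, sum_sub_distrib]
  push_cast
  rfl

lemma even_of_lt_pred (hf : Antitone f) (hN : ∀ j, N ≤ j → f j = 0) (ho : IsOrthogonal f)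
    (hp : ParityPaired f) {m : ℕ} (hm : 0 < m) (hlt : f m < f (m - 1))
    (hev : Even (f m) ∨ Even (f (m - 1))) : Even m := by
  induction m using Nat.strong_induction_on with
  | _ m ih =>
  rcases Nat.even_or_odd (f (m - 1)) with hpe | hpo
  · -- the run `[s, m)` of the even value `f (m - 1)` starts at an even index by induction,
    -- and has even length by orthogonality
    set s := ptrans f (f (m - 1))
    have hs : ∀ j, j < s ↔ f (m - 1) + 1 ≤ f j := lt_ptrans_iff hf hN _
    have hsm : s ≤ m - 1 := by
      by_contra! h
      have := (hs (m - 1)).1 h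
      omega
    have hfs : f s = f (m - 1) :=
      le_antisymm (by have := (hs s).not.1 (lt_irrefl s); omega) (hf hsm)
    have hmult : pmult f (f (m - 1)) = m - s := by
      rw [pmult, natCard_subtype_eq_card (Ico s m), Nat.card_Ico]
      intro j
      have := hs j
      have : j ≤ m - 1 → f (m - 1) ≤ f j := fun h => hf h
      have : m ≤ j → f j ≤ f m := fun h => hf h
      rw [mem_Ico]
      omega
    have hrun : Even (m - s) := hmult ▸ ho _ (by omega) hpe
    have hs_even : Even s := by
      rcases Nat.eq_zero_or_pos s with h0 | hpos
      · simp [h0]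
      have := (hs (s - 1)).1 (by omega)
      exact ih s (by omega) hpos (by omega) (Or.inl (hfs ▸ hpe))
    rw [← Nat.add_sub_cancel' (hsm.trans (Nat.sub_le m 1))]
    exact hs_even.add hrun
  · have hfm : Even (f m) := hev.resolve_right (Nat.not_even_iff_odd.2 hpo)
    rw [Nat.even_iff] at hfm ⊢
    rw [Nat.odd_iff] at hpo
    by_contra hodd
    have := hp (m / 2)
    rw [show 2 * (m / 2) = m - 1 by omega, show m - 1 + 1 = m by omega] at this
    omega

end Partition

def xiD (f g : ℕ → ℕ) (j : ℕ) : ℤ :=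
  if f j % 2 = 1 ∧ g j % 2 = 1 then
    if j % 2 = 0 ∧ (j = 0 ∨ f j + g j < f (j - 1) + g (j - 1)) then 1
    else if j % 2 = 1 ∧ f (j + 1) + g (j + 1) < f j + g j then -1 else 0
  else 0

def oddPair (f g : ℕ → ℕ) (j : ℕ) : ℤ := if f j % 2 = 1 ∧ g j % 2 = 1 then 1 else 0

noncomputable def wD (f g : ℕ → ℕ) (j : ℕ) : ℕ := (f j + g j + xiD f g j).toNat

/-- For antitone `f`, `g`: the indicator that `2i` carries two odd parts but does not start a
run of `f + g`. -/
def xiPotential (f g : ℕ → ℕ) (i : ℕ) : ℤ := oddPair f g (2 * i) - xiD f g (2 * i)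

section Waldspurger

variable {f g : ℕ → ℕ} {N : ℕ}

lemma xiSeq_eq_xiD {d : ℕ} (hd : Even d) (j : ℕ) : xiSeq f g 1 1 d j = xiD f g j := by
  rw [Nat.even_iff] at hd
  unfold xiSeq xiD
  split_ifs <;> omega

lemma odd_of_xiD_ne_zero {j : ℕ} (h : xiD f g j ≠ 0) : f j % 2 = 1 ∧ g j % 2 = 1 := by
  unfold xiD at h
  split_ifs at h with h' <;> first | exact h' | exact absurd rfl h

lemma abs_xiD_two_mul (i : ℕ) : |xiD f g (2 * i)| = xiD f g (2 * i) := by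
  unfold xiD
  split_ifs <;> first | rfl | omega

lemma abs_xiD_two_mul_add_one (i : ℕ) : |xiD f g (2 * i + 1)| = -xiD f g (2 * i + 1) := by
  unfold xiD
  split_ifs <;> first | rfl | omega

lemma oddPair_two_mul_add_one {i : ℕ} (hpf : f (2 * i) % 2 = f (2 * i + 1) % 2)
    (hpg : g (2 * i) % 2 = g (2 * i + 1) % 2) : oddPair f g (2 * i + 1) = oddPair f g (2 * i) := by
  unfold oddPair
  split_ifs <;> first | rfl | omega

lemma wD_cast (j : ℕ) : (wD f g j : ℤ) = f j + g j + xiD f g j := by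
  refine Int.toNat_of_nonneg ?_
  unfold xiD
  split_ifs <;> omega

lemma wald_eq_wD {d : ℕ} (hd : Even d) (j : ℕ) : wald f g 1 1 d j = wD f g j := by
  rw [wD_cast, wald, xiSeq_eq_xiD hd]

lemma wD_eq_zero {j : ℕ} (hf : f j = 0) (hg : g j = 0) : wD f g j = 0 := by
  simp [wD, xiD, hf, hg]

lemma wD_succ_le (hf : Antitone f) (hg : Antitone g) (j : ℕ) : wD f g (j + 1) ≤ wD f g j := by
  have : f (j + 1) ≤ f j := hf (Nat.le_succ j)
  have : g (j + 1) ≤ g j := hg (Nat.le_succ j)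
  refine Int.toNat_le_toNat ?_
  unfold xiD
  simp only [Nat.add_sub_cancel]
  -- `split_ifs` would turn `j + 1 = 0` into `False`, which `omega` does not accept
  repeat' split
  all_goals omega

lemma antitone_wD (hf : Antitone f) (hg : Antitone g) : Antitone (wD f g) :=
  antitone_nat_of_succ_le (wD_succ_le hf hg)

lemma mod_two_wD (j : ℕ) :
    ((wD f g j % 2 : ℕ) : ℤ) = f j % 2 + g j % 2 - 2 * oddPair f g j + |xiD f g j| := by
  have h := wD_cast (f := f) (g := g) j
  push_cast
  unfold oddPair
  unfold xiD at h ⊢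
  split_ifs at h ⊢ <;> simp only [abs_one, abs_neg, abs_zero] <;> omega

lemma wD_eq_iff_of_even {k : ℕ} (hk : Even k) (j : ℕ) :
    wD f g j = k ↔ f j + g j = k ∧ xiD f g j = 0 := by
  rw [← Nat.cast_inj (R := ℤ), wD_cast]
  rw [Nat.even_iff] at hk
  unfold xiD
  repeat' split
  all_goals omega

lemma xiPotential_zero : xiPotential f g 0 = 0 := by
  simp only [xiPotential, oddPair, xiD, mul_zero, Nat.zero_mod, true_or, and_true]
  split_ifs <;> simp

lemma xiPotential_eq_zero {i : ℕ} (h : f (2 * i) = 0) : xiPotential f g i = 0 := by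
  simp only [xiPotential, oddPair, xiD]
  split_ifs <;> omega

lemma xiPotential_succ (hf : Antitone f) (hg : Antitone g) {i : ℕ}
    (hpf : f (2 * i) % 2 = f (2 * i + 1) % 2) (hpg : g (2 * i) % 2 = g (2 * i + 1) % 2) :
    xiPotential f g (i + 1) = oddPair f g (2 * i) + xiD f g (2 * i + 1) := by
  have : f (2 * i + 2) ≤ f (2 * i + 1) := hf (Nat.le_succ _)
  have : g (2 * i + 2) ≤ g (2 * i + 1) := hg (Nat.le_succ _)
  simp only [xiPotential, oddPair, xiD, show 2 * (i + 1) = 2 * i + 2 by ring,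
    show 2 * i + 1 + 1 = 2 * i + 2 by ring, show 2 * i + 2 - 1 = 2 * i + 1 by omega]
  repeat' split
  all_goals omega

lemma sum_xiD_eq_zero (hf : Antitone f) (hg : Antitone g) (hpf : ParityPaired f)
    (hpg : ParityPaired g) {T : ℕ} (hT : f (2 * T) = 0) :
    ∑ j ∈ range (2 * T), xiD f g j = 0 := by
  rw [sum_range_two_mul_eq_sub _ (xiPotential f g) (fun i => ?_) T, xiPotential_eq_zero hT,
    xiPotential_zero, sub_zero]
  rw [xiPotential_succ hf hg (hpf i) (hpg i), xiPotential]
  ring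

lemma sum_weighted_xiD_eq_zero (hf : Antitone f) (hg : Antitone g) (hpf : ParityPaired f)
    (hpg : ParityPaired g) {T : ℕ} (hT : f (2 * T) = 0) :
    ∑ j ∈ range (2 * T), ((2 * j + 1 : ℤ) * xiD f g j - |xiD f g j| + 2 * oddPair f g j) = 0 := by
  rw [sum_range_two_mul_eq_sub _ (fun i => 4 * i * xiPotential f g i) (fun i => ?_) T,
    xiPotential_eq_zero hT]
  · simp
  rw [abs_xiD_two_mul, abs_xiD_two_mul_add_one, oddPair_two_mul_add_one (hpf i) (hpg i),
    xiPotential_succ hf hg (hpf i) (hpg i), xiPotential]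
  push_cast
  ring

lemma isPartitionOf_wD {d₁ d₂ T : ℕ} (h₁ : IsPartitionOf f d₁) (h₂ : IsPartitionOf g d₂)
    (hpf : ParityPaired f) (hpg : ParityPaired g)
    (hfT : ∀ j, 2 * T ≤ j → f j = 0) (hgT : ∀ j, 2 * T ≤ j → g j = 0) :
    IsPartitionOf (wD f g) (d₁ + d₂) := by
  refine ⟨antitone_wD h₁.1 h₂.1, 2 * T, fun j hj => wD_eq_zero (hfT j hj) (hgT j hj), ?_⟩
  zify
  simp_rw [wD_cast]
  rw [sum_add_distrib, sum_add_distrib, sum_xiD_eq_zero h₁.1 h₂.1 hpf hpg (hfT _ le_rfl),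
    ← h₁.sum_range_eq hfT, ← h₂.sum_range_eq hgT]
  push_cast
  ring

lemma sumSqTrans_sub_oddCount_wD {T : ℕ} (hf : Antitone f) (hg : Antitone g)
    (hpf : ParityPaired f) (hpg : ParityPaired g)
    (hfT : ∀ j, 2 * T ≤ j → f j = 0) (hgT : ∀ j, 2 * T ≤ j → g j = 0) :
    (sumSqTrans (wD f g) : ℤ) - oddCount (wD f g)
      = ((sumSqTrans f : ℤ) - oddCount f) + ((sumSqTrans g : ℤ) - oddCount g) := by
  rw [sumSqTrans_sub_oddCount_eq_sum (antitone_wD hf hg)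
      fun j hj => wD_eq_zero (hfT j hj) (hgT j hj),
    sumSqTrans_sub_oddCount_eq_sum hf hfT, sumSqTrans_sub_oddCount_eq_sum hg hgT,
    ← sum_add_distrib, ← sub_eq_zero, ← sum_sub_distrib,
    ← sum_weighted_xiD_eq_zero hf hg hpf hpg (hfT _ le_rfl)]
  refine sum_congr rfl fun j _ => ?_
  rw [mod_two_wD, wD_cast]
  push_cast
  ring

lemma even_of_add_lt_pred (hf : Antitone f) (hg : Antitone g) (hfN : ∀ j, N ≤ j → f j = 0)
    (hgN : ∀ j, N ≤ j → g j = 0) (hfo : IsOrthogonal f) (hgo : IsOrthogonal g)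
    (hpf : ParityPaired f) (hpg : ParityPaired g)
    {m : ℕ} (hm : 0 < m) (hlt : f m + g m < f (m - 1) + g (m - 1))
    (hev : Even (f m) ∧ Even (g m) ∨ Even (f (m - 1)) ∧ Even (g (m - 1))) : Even m := by
  have : f m ≤ f (m - 1) := hf (Nat.sub_le m 1)
  have : g m ≤ g (m - 1) := hg (Nat.sub_le m 1)
  by_cases hflt : f m < f (m - 1)
  · exact even_of_lt_pred hf hfN hfo hpf hm hflt (hev.imp And.left And.left)
  · exact even_of_lt_pred hg hgN hgo hpg hm (by omega) (hev.imp And.right And.right)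

lemma even_card_filter_xiD_eq_zero (hf : Antitone f) (hg : Antitone g)
    (hfN : ∀ j, N ≤ j → f j = 0) (hgN : ∀ j, N ≤ j → g j = 0) (hfo : IsOrthogonal f)
    (hgo : IsOrthogonal g) (hpf : ParityPaired f) (hpg : ParityPaired g) {a b k : ℕ}
    (hk : Even k) (hrun : ∀ j, f j + g j = k ↔ a ≤ j ∧ j < b) :
    Even #((Ico a b).filter fun j => xiD f g j = 0) := by
  rcases le_or_gt b a with hba | hab
  · simp [Ico_eq_empty_of_le hba]
  have hka : f a + g a = k := (hrun a).2 ⟨le_rfl, hab⟩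
  have hconst : ∀ j, a ≤ j → j < b → f j = f a ∧ g j = g a := fun j hj hjb => by
    have := (hrun j).2 ⟨hj, hjb⟩
    have := hf hj
    have := hg hj
    omega
  have hpred : ∀ j, f j + g j ≤ f (j - 1) + g (j - 1) := fun j =>
    add_le_add (hf (Nat.sub_le j 1)) (hg (Nat.sub_le j 1))
  have hsucc : ∀ j, f (j + 1) + g (j + 1) ≤ f j + g j := fun j =>
    add_le_add (hf (Nat.le_succ j)) (hg (Nat.le_succ j))
  have hstart : ∀ j, a ≤ j → j < b → ((j = 0 ∨ f j + g j < f (j - 1) + g (j - 1)) ↔ j = a) :=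
    fun j hj hjb => by
      have := hrun j
      have := hrun (j - 1)
      have := hpred j
      omega
  have hend : ∀ j, a ≤ j → j < b → (f (j + 1) + g (j + 1) < f j + g j ↔ j + 1 = b) :=
    fun j hj hjb => by
      have := hrun j
      have := hrun (j + 1)
      have := hsucc j
      omega
  rw [Nat.even_iff] at hk
  rcases Nat.even_or_odd (f a) with hfa | hfa
  · have hga : Even (g a) := by rw [Nat.even_iff] at hfa ⊢; omega
    have hfilter : (Ico a b).filter (fun j => xiD f g j = 0) = Ico a b := by
      refine filter_true_of_mem fun j hj => ?_
      rw [mem_Ico] at hj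
      by_contra hne
      have := odd_of_xiD_ne_zero hne
      have := hconst j hj.1 hj.2
      rw [Nat.even_iff] at hfa
      omega
    have ha : Even a := by
      rcases Nat.eq_zero_or_pos a with h0 | hpos
      · simp [h0]
      refine even_of_add_lt_pred hf hg hfN hgN hfo hgo hpf hpg hpos ?_ (Or.inl ⟨hfa, hga⟩)
      have := hrun (a - 1)
      have := hpred a
      omega
    have hb : Even b := by
      obtain ⟨hfb, hgb⟩ := hconst (b - 1) (by omega) (by omega)
      refine even_of_add_lt_pred hf hg hfN hgN hfo hgo hpf hpg (by omega) ?_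
        (Or.inr ⟨hfb ▸ hfa, hgb ▸ hga⟩)
      have := hrun b
      have := hrun (b - 1)
      have := hpred b
      omega
    rw [hfilter, Nat.card_Ico]
    exact (Nat.even_sub hab.le).2 (iff_of_true hb ha)
  · -- `ξ` vanishes on the run except at an even start and an odd end
    have hfilter : (Ico a b).filter (fun j => xiD f g j = 0)
        = Ico (a + 1 - a % 2) (b - 1 + b % 2) := by
      ext j
      rw [mem_filter, mem_Ico, mem_Ico]
      by_cases hj : a ≤ j ∧ j < b
      · obtain ⟨hfj, hgj⟩ := hconst j hj.1 hj.2
        rw [Nat.odd_iff] at hfa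
        unfold xiD
        simp only [hstart j hj.1 hj.2, hend j hj.1 hj.2]
        repeat' split
        all_goals omega
      · omega
    rw [hfilter, Nat.card_Ico, Nat.even_iff]
    omega

lemma isOrthogonal_wD (hf : Antitone f) (hg : Antitone g)
    (hfN : ∀ j, N ≤ j → f j = 0) (hgN : ∀ j, N ≤ j → g j = 0) (hfo : IsOrthogonal f)
    (hgo : IsOrthogonal g) (hpf : ParityPaired f) (hpg : ParityPaired g) :
    IsOrthogonal (wD f g) := by
  intro k hk hke
  have hrun := eq_iff_ptrans_le_and_lt (f := fun j => f j + g j) (N := N)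
    (fun i j hij => add_le_add (hf hij) (hg hij)) (fun j hj => by simp [hfN j hj, hgN j hj]) hk
  rw [pmult, natCard_subtype_eq_card
    ((Ico (ptrans _ k) (ptrans _ (k - 1))).filter fun j => xiD f g j = 0)]
  · exact even_card_filter_xiD_eq_zero hf hg hfN hgN hfo hgo hpf hpg hke hrun
  intro j
  rw [wD_eq_iff_of_even hke, mem_filter, mem_Ico, hrun]

end Waldspurger

/-- type D dimension.  `d₁ = 2n₁`, `d₂ = 2n₂`, `d = 2n = d₁+d₂`,
`λ₁, λ₂` special orthogonal of `d₁, d₂`.  Then `W = W(λ₁,λ₂)` (ε₁=ε₂=1) is an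
orthogonal partition of `d` and
`D_o(W) = D_o(λ₁) + D_o(λ₂) + n(2n−1) − n₁(2n₁−1) − n₂(2n₂−1)`. -/
theorem stmt5 (n1 n2 : ℕ) (lam1 lam2 : ℕ → ℕ)
    (h1 : IsPartitionOf lam1 (2*n1)) (h1o : IsOrthogonal lam1)
    (h1s : IsSymplectic (ptrans lam1))
    (h2 : IsPartitionOf lam2 (2*n2)) (h2o : IsOrthogonal lam2)
    (h2s : IsSymplectic (ptrans lam2)) :
    ∃ w : ℕ → ℕ, (∀ j, (w j : ℤ) = wald lam1 lam2 1 1 (2*n1+2*n2) j) ∧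
      IsPartitionOf w (2*n1+2*n2) ∧ IsOrthogonal w ∧
      Dorth w (2*n1+2*n2)
        = Dorth lam1 (2*n1) + Dorth lam2 (2*n2)
          + (((n1+n2 : ℕ) : ℚ) * (2 * ((n1+n2 : ℕ) : ℚ) - 1)
             - (n1 : ℚ) * (2 * (n1 : ℚ) - 1)
             - (n2 : ℚ) * (2 * (n2 : ℚ) - 1)) := by
  obtain ⟨N₁, hN₁, -⟩ := h1.2
  obtain ⟨N₂, hN₂, -⟩ := h2.2
  have hfT : ∀ j, 2 * (N₁ + N₂) ≤ j → lam1 j = 0 := fun j hj => hN₁ j (by omega)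
  have hgT : ∀ j, 2 * (N₁ + N₂) ≤ j → lam2 j = 0 := fun j hj => hN₂ j (by omega)
  have hpf := parityPaired_of_isSymplectic_ptrans h1.1 hN₁ h1s
  have hpg := parityPaired_of_isSymplectic_ptrans h2.1 hN₂ h2s
  refine ⟨wD lam1 lam2, fun j => (wald_eq_wD ⟨n1 + n2, by ring⟩ j).symm,
    isPartitionOf_wD h1 h2 hpf hpg hfT hgT, isOrthogonal_wD h1.1 h2.1 hfT hgT h1o h2o hpf hpg, ?_⟩
  have key : ((sumSqTrans (wD lam1 lam2) : ℚ) - oddCount (wD lam1 lam2))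
      = ((sumSqTrans lam1 : ℚ) - oddCount lam1) + ((sumSqTrans lam2 : ℚ) - oddCount lam2) := by
    exact_mod_cast sumSqTrans_sub_oddCount_wD h1.1 h2.1 hpf hpg hfT hgT
  unfold Dorth
  push_cast
  linear_combination (-1 / 2 : ℚ) * key
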